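/- Let A, A', B, B', C ∈ ℂ^{r×r} with C + nI invertible for all integers n ≥ 0, A, A', B pairwise commuting, B'C = CB', and |x| < 1, |y| < 1; let s be a non-negative integer. (i) If A + kI is invertible for all integers k ≥ 0, then F₃(A+sI, A', B, B'; C; x, y) = ∑_{k=0}^{s} (s choose k) (B)_k x^k ·[F₃(A+kI, A', B+kI, B'; C+kI; x, y)]·(C)_k⁻¹. (ii) If A' + kI is invertible for all integers k ≥ 0, then F₃(A, A'+sI, B, B'; C; x, y) = ∑_{k=0}^{s} (s choose k) y^k ·[F₃(A, A'+kI, B, B'+kI; C+kI; x, y)]·(B')_k·(C)_k⁻¹. (iii) If A − kI is invertible for all integers 1 ≤ k ≤ s, then F₃(A−sI, A', B, B'; C; x, y) = ∑_{k=0}^{s} (s choose k) (B)_k (−x)^k ·[F₃(A, A', B+kI, B'; C+kI; x, y)]·(C)_k⁻¹. (iv) If A' − kI is invertible for all integers 1 ≤ k ≤ s, then F₃(A, A'−sI, B, B'; C; x, y) = ∑_{k=0}^{s} (s choose k) (−y)^k ·[F₃(A, A', B, B'+kI; C+kI; x, y)]·(B')_k·(C)_k⁻¹. -/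

import Mathlib

/-- The shifted factorial (Pochhammer) matrix: `(A)_0 = I`, `(A)_{n+1} = (A)_n (A + nI)`. -/
noncomputable def mPoch {r : ℕ} (A : Matrix (Fin r) (Fin r) ℂ) : ℕ → Matrix (Fin r) (Fin r) ℂ
  | 0 => 1
  | n + 1 => mPoch A n * (A + (n : ℂ) • 1)

/-- The third Appell matrix function `F₃(A, A', B, B'; C; x, y)`. -/
noncomputable def appellF3 {r : ℕ} (A A' B B' C : Matrix (Fin r) (Fin r) ℂ) (x y : ℂ) :
    Matrix (Fin r) (Fin r) ℂ :=
  ∑' p : ℕ × ℕ,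
    (((p.1.factorial : ℂ) * (p.2.factorial : ℂ))⁻¹ * x ^ p.1 * y ^ p.2) •
      (mPoch A p.1 * mPoch A' p.2 * mPoch B p.1 * mPoch B' p.2 * (mPoch C (p.1 + p.2))⁻¹)

/-!
By induction on `s`, using `(X + I)_M = (X)_M + M (X + I)_{M-1}`, the Pochhammer matrices satisfy
`(A + sI)_M = ∑ₖ C(s,k) M!/(M-k)! (A + kI)_{M-k}` and
`(A - sI)_M = ∑ₖ C(s,k) (-1)^k M!/(M-k)! (A)_{M-k}`.
Substituting such an expansion of `(A)_m` (or `(A')_n`) splits the `F₃` series into `s + 1` series.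
In the `k`-th one the shift `m ↦ k + m` turns the weight `(k+m)!/m!` times `1/(k+m)!` into `1/m!`,
while `(B)_{k+m} = (B)_k (B + kI)_m` and `(C)_{k+m+n} = (C)_k (C + kI)_{m+n}` produce the outer
factors, which the commutation hypotheses move to the ends. Exchanging the finite sum with the
double series needs only the convergence of `F₃` for `|x|, |y| < 1`, a ratio test based on the
Neumann bound `‖(C + jI)⁻¹‖ ≤ 1 / (j - ‖C‖)`.
-/

open Finset Filter Topology

theorem sum_range_succ_choose_mul_smul {R M : Type*} [CommSemiring R] [AddCommMonoid M]
    [Module R M] (s : ℕ) (a : ℕ → R) (f : ℕ → M) :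
    ∑ k ∈ range (s + 1 + 1), ((s + 1).choose k * a k) • f k =
      ∑ k ∈ range (s + 1), (s.choose k * a k) • f k +
        ∑ k ∈ range (s + 1), (s.choose k * a (k + 1)) • f (k + 1) := by
  simpa only [mul_smul, Nat.cast_smul_eq_nsmul] using
    sum_choose_succ_nsmul (fun i _ => a i • f i) s

theorem Commute.nonsing_inv_right {n α : Type*} [Fintype n] [DecidableEq n] [CommRing α]
    {X M : Matrix n n α} (h : Commute X M) : Commute X M⁻¹ := by
  by_cases hM : IsUnit M.det
  · calc X * M⁻¹ = M⁻¹ * (M * X) * M⁻¹ := by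
          rw [← mul_assoc, Matrix.nonsing_inv_mul M hM, one_mul]
      _ = M⁻¹ * X := by rw [← h.eq, mul_assoc, mul_assoc, Matrix.mul_nonsing_inv M hM, mul_one]
  · rw [Matrix.nonsing_inv_apply_not_isUnit M hM]
    exact Commute.zero_right X

theorem descFactorial_mul_inv_factorial {K : Type*} [Field K] [CharZero K] (k m : ℕ) :
    ((k + m).descFactorial k : K) * ((k + m).factorial : K)⁻¹ = (m.factorial : K)⁻¹ := by
  have h := Nat.factorial_mul_descFactorial (Nat.le_add_right k m)
  rw [Nat.add_sub_cancel_left] at h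
  rw [← h]
  push_cast
  field_simp

theorem summable_prod_range_of_tendsto {q : ℕ → ℝ} {l : ℝ} (hq : ∀ j, 0 ≤ q j)
    (hl : l < 1) (hlim : Tendsto q atTop (𝓝 l)) : Summable fun m => ∏ j ∈ range m, q j := by
  obtain ⟨ρ, hlρ, hρ⟩ := exists_between hl
  refine summable_of_ratio_norm_eventually_le hρ ?_
  filter_upwards [hlim.eventually_le_const hlρ] with m hm
  rw [prod_range_succ, Real.norm_of_nonneg (prod_nonneg fun j _ => hq j),
    Real.norm_of_nonneg (mul_nonneg (prod_nonneg fun j _ => hq j) (hq m)), mul_comm ρ]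
  exact mul_le_mul_of_nonneg_left hm (prod_nonneg fun j _ => hq j)

section Shift

variable {E : Type*} [AddCommMonoid E] [TopologicalSpace E]

theorem HasSum.of_shift_fst {f : ℕ × ℕ → E} {a : E} {k : ℕ} (hf : ∀ p : ℕ × ℕ, p.1 < k → f p = 0)
    (h : HasSum (fun p : ℕ × ℕ => f (k + p.1, p.2)) a) : HasSum f a := by
  refine ((Function.Injective.hasSum_iff (g := fun p : ℕ × ℕ => (k + p.1, p.2))
    (fun p q hpq => by simp_all [Prod.ext_iff]) fun p hp => hf p ?_).mp h)
  by_contra hk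
  exact hp ⟨(p.1 - k, p.2), Prod.ext (by simp only; omega) rfl⟩

theorem HasSum.of_shift_snd {f : ℕ × ℕ → E} {a : E} {k : ℕ} (hf : ∀ p : ℕ × ℕ, p.2 < k → f p = 0)
    (h : HasSum (fun p : ℕ × ℕ => f (p.1, k + p.2)) a) : HasSum f a := by
  refine ((Function.Injective.hasSum_iff (g := fun p : ℕ × ℕ => (p.1, k + p.2))
    (fun p q hpq => by simp_all [Prod.ext_iff]) fun p hp => hf p ?_).mp h)
  by_contra hk
  exact hp ⟨(p.1, p.2 - k), Prod.ext rfl (by simp only; omega)⟩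

end Shift

theorem add_one_le_of_not_lt_ceil_add_one {c : ℝ} {j : ℕ} (h : ¬ j < ⌈c⌉₊ + 1) : c + 1 ≤ j := by
  have : (⌈c⌉₊ : ℝ) + 1 ≤ j := by exact_mod_cast not_lt.mp h
  linarith [Nat.le_ceil c]

variable {r : ℕ}

local notation "Mat" => Matrix (Fin r) (Fin r) ℂ

theorem mPoch_add (A : Mat) (k m : ℕ) :
    mPoch A (k + m) = mPoch A k * mPoch (A + (k : ℂ) • 1) m := by
  induction m with
  | zero => simp [mPoch]
  | succ m ih =>
    rw [← add_assoc, mPoch, ih, mPoch, mul_assoc, add_assoc, ← add_smul]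
    push_cast
    rfl

theorem Commute.mPoch_right {X A : Mat} (h : Commute X A) (n : ℕ) : Commute X (mPoch A n) := by
  induction n with
  | zero => exact Commute.one_right X
  | succ n ih => exact ih.mul_right (h.add_right ((Commute.one_right X).smul_right _))

theorem Commute.mPoch_mPoch {X Y : Mat} (h : Commute X Y) (m n : ℕ) :
    Commute (mPoch X m) (mPoch Y n) :=
  ((h.mPoch_right n).symm.mPoch_right m).symm

theorem add_natCast_smul_one_add_one (A : Mat) (k : ℕ) :
    A + (k : ℂ) • 1 + 1 = A + ((k + 1 : ℕ) : ℂ) • 1 := by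
  rw [Nat.cast_succ, add_smul, one_smul, add_assoc]

theorem mPoch_add_one (X : Mat) (M : ℕ) :
    mPoch (X + 1) M = mPoch X M + (M : ℂ) • mPoch (X + 1) (M - 1) := by
  cases M with
  | zero => simp [mPoch]
  | succ M =>
    have hX : mPoch X (1 + M) = X * mPoch (X + 1) M := by
      rw [mPoch_add]; simp [mPoch]
    have hcomm : Commute X (mPoch (X + 1) M) :=
      ((Commute.refl X).add_right (Commute.one_right X)).mPoch_right M
    rw [add_comm 1 M] at hX
    rw [hX, mPoch, Nat.add_sub_cancel, hcomm.eq, Nat.cast_succ, add_smul, one_smul]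
    simp only [mul_add, mul_one, Matrix.mul_smul]
    abel

theorem mPoch_add_natCast_smul_eq_sum (A : Mat) (s M : ℕ) :
    mPoch (A + (s : ℂ) • 1) M =
      ∑ k ∈ range (s + 1),
        ((s.choose k : ℂ) * M.descFactorial k) • mPoch (A + (k : ℂ) • 1) (M - k) := by
  induction s generalizing A with
  | zero => simp
  | succ s ih =>
    have hA : A + ((s + 1 : ℕ) : ℂ) • 1 = A + 1 + (s : ℂ) • 1 := by
      rw [Nat.cast_succ, add_smul, one_smul]; abel
    have hstep (k : ℕ) :
        ((s.choose k : ℂ) * M.descFactorial k) • mPoch (A + 1 + (k : ℂ) • 1) (M - k) =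
          ((s.choose k : ℂ) * M.descFactorial k) • mPoch (A + (k : ℂ) • 1) (M - k) +
            ((s.choose k : ℂ) * M.descFactorial (k + 1)) •
              mPoch (A + ((k + 1 : ℕ) : ℂ) • 1) (M - (k + 1)) := by
      rw [add_right_comm, mPoch_add_one, add_natCast_smul_one_add_one, smul_add, smul_smul,
        Nat.descFactorial_succ, Nat.sub_sub, Nat.cast_mul, mul_comm (((M - k : ℕ)) : ℂ),
        mul_assoc]
    simp only [hA, ih, hstep, sum_add_distrib, sum_range_succ_choose_mul_smul]

theorem mPoch_sub_natCast_smul_eq_sum (A : Mat) (s M : ℕ) :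
    mPoch (A - (s : ℂ) • 1) M =
      ∑ k ∈ range (s + 1),
        ((s.choose k : ℂ) * (-1) ^ k * M.descFactorial k) • mPoch A (M - k) := by
  induction s generalizing M with
  | zero => simp
  | succ s ih =>
    have hA : A - ((s + 1 : ℕ) : ℂ) • 1 + 1 = A - (s : ℂ) • 1 := by
      rw [Nat.cast_succ, add_smul, one_smul]; abel
    have hM : mPoch (A - ((s + 1 : ℕ) : ℂ) • 1) M =
        mPoch (A - (s : ℂ) • 1) M - (M : ℂ) • mPoch (A - (s : ℂ) • 1) (M - 1) := by
      rw [eq_sub_iff_add_eq, ← hA, ← mPoch_add_one]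
    have hstep (k : ℕ) :
        -((M : ℂ) • (((s.choose k : ℂ) * (-1) ^ k * (M - 1).descFactorial k) •
          mPoch A (M - 1 - k))) =
          ((s.choose k : ℂ) * (-1) ^ (k + 1) * M.descFactorial (k + 1)) •
            mPoch A (M - (k + 1)) := by
      rcases M with _ | M
      · simp
      · rw [smul_smul, ← neg_smul, Nat.add_sub_cancel, Nat.succ_descFactorial_succ,
          Nat.add_sub_add_right]
        push_cast
        ring_nf
    rw [hM, ih, ih, smul_sum, sub_eq_add_neg, ← sum_neg_distrib]
    simp only [hstep]
    simp only [mul_assoc, sum_range_succ_choose_mul_smul]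

noncomputable def appellF3Term (A A' B B' C : Mat) (x y : ℂ) (p : ℕ × ℕ) : Mat :=
  (((p.1.factorial : ℂ) * (p.2.factorial : ℂ))⁻¹ * x ^ p.1 * y ^ p.2) •
    (mPoch A p.1 * mPoch A' p.2 * mPoch B p.1 * mPoch B' p.2 * (mPoch C (p.1 + p.2))⁻¹)

section Summability

attribute [local instance] Matrix.linftyOpNormedRing Matrix.linftyOpNormedAlgebra

theorem Matrix.linfty_opNorm_one_le {n α : Type*} [Fintype n] [DecidableEq n] [NormedRing α]
    [NormOneClass α] : ‖(1 : Matrix n n α)‖ ≤ 1 := by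
  rw [← Matrix.diagonal_one, Matrix.linfty_opNorm_diagonal]
  exact (pi_norm_const_le (1 : α)).trans norm_one.le

theorem norm_add_natCast_smul_one_le (A : Mat) (j : ℕ) : ‖A + (j : ℂ) • 1‖ ≤ ‖A‖ + j := by
  refine (norm_add_le _ _).trans ?_
  rw [norm_smul, Complex.norm_natCast]
  gcongr
  exact mul_le_of_le_one_right (Nat.cast_nonneg j) Matrix.linfty_opNorm_one_le

theorem norm_mPoch_le (A : Mat) (m : ℕ) : ‖mPoch A m‖ ≤ ∏ j ∈ range m, (‖A‖ + j) := by
  induction m with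
  | zero => simpa [mPoch] using Matrix.linfty_opNorm_one_le
  | succ m ih =>
    rw [mPoch, prod_range_succ]
    exact (norm_mul_le _ _).trans
      (mul_le_mul ih (norm_add_natCast_smul_one_le A m) (norm_nonneg _) (by positivity))

/-- Neumann series: `C + jI = j (I - T)` with `‖T‖ = ‖C‖ / j < 1`. -/
theorem norm_inv_add_natCast_smul_one_le (C : Mat) {j : ℕ} (h : ‖C‖ < j) :
    ‖(C + (j : ℂ) • 1)⁻¹‖ ≤ (j - ‖C‖)⁻¹ := by
  have hj : (0 : ℝ) < j := (norm_nonneg C).trans_lt h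
  have hj' : (j : ℂ) ≠ 0 := by exact_mod_cast hj.ne'
  set T : Mat := -((j : ℂ)⁻¹ • C)
  have hT : ‖T‖ = ‖C‖ / j := by
    rw [norm_neg, norm_smul, norm_inv, Complex.norm_natCast, inv_mul_eq_div]
  have hT1 : ‖T‖ < 1 := by rwa [hT, div_lt_one hj]
  have hinv : (C + (j : ℂ) • 1) * ((j : ℂ)⁻¹ • ∑' n, T ^ n) = 1 := by
    have hC : C + (j : ℂ) • 1 = (j : ℂ) • (1 - T) := by
      rw [sub_neg_eq_add, smul_add, smul_smul, mul_inv_cancel₀ hj', one_smul, add_comm]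
    rw [hC, smul_mul_smul_comm, mul_inv_cancel₀ hj', one_smul]
    exact mul_neg_geom_series T hT1
  rw [Matrix.inv_eq_right_inv hinv, norm_smul, norm_inv, Complex.norm_natCast]
  calc (j : ℝ)⁻¹ * ‖∑' n, T ^ n‖ ≤ (j : ℝ)⁻¹ * (1 - ‖T‖)⁻¹ := by
        gcongr
        calc ‖∑' n, T ^ n‖ ≤ ‖(1 : Mat)‖ - 1 + (1 - ‖T‖)⁻¹ := tsum_geometric_le_of_norm_lt_one T hT1
          _ ≤ (1 - ‖T‖)⁻¹ := by linarith [Matrix.linfty_opNorm_one_le (n := Fin r) (α := ℂ)]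
    _ = (j - ‖C‖)⁻¹ := by
        rw [hT, ← mul_inv]
        congr 1
        field_simp

/-- An antitone majorant of `j ↦ ‖(C + jI)⁻¹‖` that is asymptotic to `1 / j`. -/
noncomputable def invBound (C : Mat) (j : ℕ) : ℝ :=
  if j < ⌈‖C‖⌉₊ + 1 then 1 + ∑ i ∈ range (⌈‖C‖⌉₊ + 1), ‖(C + (i : ℂ) • 1)⁻¹‖
  else (j - ‖C‖)⁻¹

theorem one_le_invBound_of_lt {C : Mat} {j : ℕ} (h : j < ⌈‖C‖⌉₊ + 1) : 1 ≤ invBound C j := by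
  rw [invBound, if_pos h]
  exact le_add_of_nonneg_right (sum_nonneg fun i _ => norm_nonneg _)

theorem invBound_le_one_of_not_lt {C : Mat} {j : ℕ} (h : ¬ j < ⌈‖C‖⌉₊ + 1) : invBound C j ≤ 1 := by
  rw [invBound, if_neg h]
  exact inv_le_one_of_one_le₀ (by linarith [add_one_le_of_not_lt_ceil_add_one h])

theorem invBound_pos (C : Mat) (j : ℕ) : 0 < invBound C j := by
  by_cases h : j < ⌈‖C‖⌉₊ + 1
  · exact one_pos.trans_le (one_le_invBound_of_lt h)
  · rw [invBound, if_neg h, inv_pos]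
    linarith [add_one_le_of_not_lt_ceil_add_one h]

theorem norm_inv_le_invBound (C : Mat) (j : ℕ) : ‖(C + (j : ℂ) • 1)⁻¹‖ ≤ invBound C j := by
  by_cases h : j < ⌈‖C‖⌉₊ + 1
  · rw [invBound, if_pos h]
    have := single_le_sum (f := fun i : ℕ => ‖(C + (i : ℂ) • 1)⁻¹‖) (fun i _ => norm_nonneg _)
      (mem_range.mpr h)
    linarith
  · rw [invBound, if_neg h]
    exact norm_inv_add_natCast_smul_one_le C (by linarith [add_one_le_of_not_lt_ceil_add_one h])

theorem invBound_antitone (C : Mat) : Antitone (invBound C) := by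
  intro i j hij
  by_cases hj : j < ⌈‖C‖⌉₊ + 1
  · rw [invBound, invBound, if_pos hj, if_pos (hij.trans_lt hj)]
  by_cases hi : i < ⌈‖C‖⌉₊ + 1
  · exact (invBound_le_one_of_not_lt hj).trans (one_le_invBound_of_lt hi)
  rw [invBound, invBound, if_neg hi, if_neg hj]
  have := add_one_le_of_not_lt_ceil_add_one hi
  gcongr
  linarith

theorem tendsto_mul_invBound (C : Mat) (b : ℝ) :
    Tendsto (fun j : ℕ => (b + j) * invBound C j) atTop (𝓝 1) := by
  have h := tendsto_add_mul_div_add_mul_atTop_nhds b (-‖C‖) 1 one_ne_zero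
  simp only [one_mul, div_one] at h
  refine h.congr' ?_
  filter_upwards [eventually_ge_atTop (⌈‖C‖⌉₊ + 1)] with j hj
  rw [invBound, if_neg (not_lt.mpr hj), div_eq_mul_inv, neg_add_eq_sub]

theorem norm_inv_mPoch_le (C : Mat) (N : ℕ) :
    ‖(mPoch C N)⁻¹‖ ≤ ∏ j ∈ range N, invBound C j := by
  induction N with
  | zero => simpa [mPoch] using Matrix.linfty_opNorm_one_le
  | succ N ih =>
    rw [mPoch, Matrix.mul_inv_rev, prod_range_succ, mul_comm (∏ j ∈ range N, invBound C j)]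
    exact (norm_mul_le _ _).trans
      (mul_le_mul (norm_inv_le_invBound C N) ih (norm_nonneg _) (invBound_pos C N).le)

theorem norm_inv_mPoch_add_le (C : Mat) (m n : ℕ) :
    ‖(mPoch C (m + n))⁻¹‖ ≤ (∏ j ∈ range m, invBound C j) * ∏ j ∈ range n, invBound C j := by
  refine (norm_inv_mPoch_le C (m + n)).trans ?_
  rw [prod_range_add]
  refine mul_le_mul_of_nonneg_left (prod_le_prod (fun j _ => (invBound_pos C _).le) fun j _ => ?_)
    (prod_nonneg fun j _ => (invBound_pos C j).le)
  exact invBound_antitone C (Nat.le_add_left j m)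

noncomputable def appellF3Majorant (C : Mat) (a b t : ℝ) (m : ℕ) : ℝ :=
  ∏ j ∈ range m, ((a + j) * (b + j) * invBound C j * t / (j + 1))

theorem appellF3Majorant_nonneg (C : Mat) {a b t : ℝ} (ha : 0 ≤ a) (hb : 0 ≤ b) (ht : 0 ≤ t)
    (m : ℕ) : 0 ≤ appellF3Majorant C a b t m :=
  prod_nonneg fun j _ => by have := invBound_pos C j; positivity

theorem appellF3Majorant_eq (C : Mat) (a b t : ℝ) (m : ℕ) :
    appellF3Majorant C a b t m = (∏ j ∈ range m, (a + j)) * (∏ j ∈ range m, (b + j)) *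
      (∏ j ∈ range m, invBound C j) * (t ^ m / m.factorial) := by
  rw [appellF3Majorant, ← prod_range_add_one_eq_factorial]
  simp only [prod_div_distrib, prod_mul_distrib, prod_const, card_range]
  push_cast
  ring

theorem summable_appellF3Majorant (C : Mat) {a b t : ℝ} (ha : 0 ≤ a) (hb : 0 ≤ b)
    (ht : 0 ≤ t) (ht1 : t < 1) : Summable (appellF3Majorant C a b t) := by
  refine summable_prod_range_of_tendsto (fun j => by have := invBound_pos C j; positivity) ht1 ?_
  have ha' := tendsto_add_mul_div_add_mul_atTop_nhds a 1 1 one_ne_zero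
  simp only [one_mul, div_one] at ha'
  have hlim := (ha'.mul (tendsto_mul_invBound C b)).mul_const t
  rw [one_mul, one_mul] at hlim
  refine hlim.congr fun j => ?_
  field_simp
  ring

theorem norm_appellF3Term_le (A A' B B' C : Mat) (x y : ℂ) (p : ℕ × ℕ) :
    ‖appellF3Term A A' B B' C x y p‖ ≤
      appellF3Majorant C ‖A‖ ‖B‖ ‖x‖ p.1 * appellF3Majorant C ‖A'‖ ‖B'‖ ‖y‖ p.2 := by
  obtain ⟨m, n⟩ := p
  have hmat : ‖mPoch A m * mPoch A' n * mPoch B m * mPoch B' n * (mPoch C (m + n))⁻¹‖ ≤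
      (∏ j ∈ range m, (‖A‖ + j)) * (∏ j ∈ range n, (‖A'‖ + j)) * (∏ j ∈ range m, (‖B‖ + j)) *
        (∏ j ∈ range n, (‖B'‖ + j)) *
        ((∏ j ∈ range m, invBound C j) * ∏ j ∈ range n, invBound C j) := by
    refine (norm_mul_le _ _).trans (mul_le_mul ?_ (norm_inv_mPoch_add_le C m n)
      (norm_nonneg _) (by positivity))
    refine (norm_mul_le _ _).trans (mul_le_mul ?_ (norm_mPoch_le B' n) (norm_nonneg _)
      (by positivity))
    refine (norm_mul_le _ _).trans (mul_le_mul ?_ (norm_mPoch_le B m) (norm_nonneg _)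
      (by positivity))
    exact (norm_mul_le _ _).trans (mul_le_mul (norm_mPoch_le A m) (norm_mPoch_le A' n)
      (norm_nonneg _) (by positivity))
  have hscalar : ‖((m.factorial : ℂ) * (n.factorial : ℂ))⁻¹ * x ^ m * y ^ n‖ =
      (‖x‖ ^ m / m.factorial) * (‖y‖ ^ n / n.factorial) := by
    simp only [norm_mul, norm_inv, norm_pow, Complex.norm_natCast]
    ring
  rw [appellF3Term, norm_smul, hscalar, appellF3Majorant_eq, appellF3Majorant_eq]
  calc _ ≤ (‖x‖ ^ m / m.factorial) * (‖y‖ ^ n / n.factorial) *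
        ((∏ j ∈ range m, (‖A‖ + j)) * (∏ j ∈ range n, (‖A'‖ + j)) * (∏ j ∈ range m, (‖B‖ + j)) *
          (∏ j ∈ range n, (‖B'‖ + j)) *
          ((∏ j ∈ range m, invBound C j) * ∏ j ∈ range n, invBound C j)) := by gcongr
    _ = _ := by ring

theorem summable_appellF3Term (A A' B B' C : Mat) {x y : ℂ} (hx : ‖x‖ < 1) (hy : ‖y‖ < 1) :
    Summable (appellF3Term A A' B B' C x y) :=
  .of_norm_bounded
    ((summable_appellF3Majorant C (norm_nonneg A) (norm_nonneg B) (norm_nonneg x) hx).mul_of_nonneg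
      (summable_appellF3Majorant C (norm_nonneg A') (norm_nonneg B') (norm_nonneg y) hy)
      (appellF3Majorant_nonneg C (norm_nonneg A) (norm_nonneg B) (norm_nonneg x))
      (appellF3Majorant_nonneg C (norm_nonneg A') (norm_nonneg B') (norm_nonneg y)))
    (norm_appellF3Term_le A A' B B' C x y)

end Summability

theorem hasSum_appellF3 (A A' B B' C : Mat) {x y : ℂ} (hx : ‖x‖ < 1) (hy : ‖y‖ < 1) :
    HasSum (appellF3Term A A' B B' C x y) (appellF3 A A' B B' C x y) :=
  (summable_appellF3Term A A' B B' C hx hy).hasSum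

/-- The part of the `F₃` series coming from the `k`-th summand of an expansion
`(P)_M = ∑ₖ wₖ M(M-1)⋯(M-k+1) (Dₖ)_{M-k}` of the first Pochhammer factor. -/
noncomputable def appellF3SliceFst (D A' B B' C : Mat) (x y : ℂ) (k : ℕ) (p : ℕ × ℕ) : Mat :=
  ((p.1.descFactorial k : ℂ) * ((p.1.factorial : ℂ) * (p.2.factorial : ℂ))⁻¹ * x ^ p.1 * y ^ p.2) •
    (mPoch D (p.1 - k) * mPoch A' p.2 * mPoch B p.1 * mPoch B' p.2 * (mPoch C (p.1 + p.2))⁻¹)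

noncomputable def appellF3SliceSnd (A D B B' C : Mat) (x y : ℂ) (k : ℕ) (p : ℕ × ℕ) : Mat :=
  ((p.2.descFactorial k : ℂ) * ((p.1.factorial : ℂ) * (p.2.factorial : ℂ))⁻¹ * x ^ p.1 * y ^ p.2) •
    (mPoch A p.1 * mPoch D (p.2 - k) * mPoch B p.1 * mPoch B' p.2 * (mPoch C (p.1 + p.2))⁻¹)

theorem appellF3Term_eq_sum_sliceFst {P A' B B' C : Mat} {x y : ℂ} {s : ℕ} {w : ℕ → ℂ}
    {D : ℕ → Mat}
    (hP : ∀ M, mPoch P M = ∑ k ∈ range (s + 1), (w k * M.descFactorial k) • mPoch (D k) (M - k))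
    (p : ℕ × ℕ) :
    appellF3Term P A' B B' C x y p =
      ∑ k ∈ range (s + 1), w k • appellF3SliceFst (D k) A' B B' C x y k p := by
  simp only [appellF3Term, appellF3SliceFst, hP, sum_mul, smul_sum, smul_mul_assoc, smul_smul]
  refine sum_congr rfl fun k _ => ?_
  ring_nf

theorem appellF3Term_eq_sum_sliceSnd {A P B B' C : Mat} {x y : ℂ} {s : ℕ} {w : ℕ → ℂ}
    {D : ℕ → Mat}
    (hP : ∀ M, mPoch P M = ∑ k ∈ range (s + 1), (w k * M.descFactorial k) • mPoch (D k) (M - k))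
    (p : ℕ × ℕ) :
    appellF3Term A P B B' C x y p =
      ∑ k ∈ range (s + 1), w k • appellF3SliceSnd A (D k) B B' C x y k p := by
  simp only [appellF3Term, appellF3SliceSnd, hP, sum_mul, mul_sum, smul_sum, smul_mul_assoc,
    mul_smul_comm, smul_smul]
  refine sum_congr rfl fun k _ => ?_
  ring_nf

theorem appellF3SliceFst_of_lt (D A' B B' C : Mat) (x y : ℂ) {k : ℕ} {p : ℕ × ℕ} (h : p.1 < k) :
    appellF3SliceFst D A' B B' C x y k p = 0 := by
  simp [appellF3SliceFst, Nat.descFactorial_eq_zero_iff_lt.mpr h]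

theorem appellF3SliceSnd_of_lt (A D B B' C : Mat) (x y : ℂ) {k : ℕ} {p : ℕ × ℕ} (h : p.2 < k) :
    appellF3SliceSnd A D B B' C x y k p = 0 := by
  simp [appellF3SliceSnd, Nat.descFactorial_eq_zero_iff_lt.mpr h]

theorem appellF3SliceFst_shift {D A' B B' C : Mat} (hDB : Commute D B) (hA'B : Commute A' B)
    (x y : ℂ) (k m n : ℕ) :
    appellF3SliceFst D A' B B' C x y k (k + m, n) =
      x ^ k • (mPoch B k * appellF3Term D A' (B + (k : ℂ) • 1) B' (C + (k : ℂ) • 1) x y (m, n) *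
        (mPoch C k)⁻¹) := by
  have hscalar : ((k + m).descFactorial k : ℂ) * (((k + m).factorial : ℂ) * (n.factorial : ℂ))⁻¹ *
      x ^ (k + m) * y ^ n =
        x ^ k * (((m.factorial : ℂ) * (n.factorial : ℂ))⁻¹ * x ^ m * y ^ n) := by
    rw [mul_inv, ← mul_assoc, descFactorial_mul_inv_factorial, pow_add]
    ring
  have hmat : mPoch D m * mPoch A' n * mPoch B (k + m) * mPoch B' n *
      (mPoch C (k + m + n))⁻¹ = mPoch B k * (mPoch D m * mPoch A' n *
        mPoch (B + (k : ℂ) • 1) m * mPoch B' n * (mPoch (C + (k : ℂ) • 1) (m + n))⁻¹) *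
        (mPoch C k)⁻¹ := by
    rw [add_assoc, mPoch_add C, Matrix.mul_inv_rev, mPoch_add B]
    simp only [mul_assoc]
    rw [← mul_assoc (mPoch B k) (mPoch D m), (hDB.symm.mPoch_mPoch k m).eq, mul_assoc,
      ← mul_assoc (mPoch B k) (mPoch A' n), (hA'B.symm.mPoch_mPoch k n).eq, mul_assoc]
  rw [appellF3SliceFst, appellF3Term, Nat.add_sub_cancel_left, hscalar, hmat, mul_smul,
    Matrix.mul_smul, Matrix.smul_mul]

theorem appellF3SliceSnd_shift {A D B B' C : Mat} (hB'C : Commute B' C) (x y : ℂ) (k m n : ℕ) :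
    appellF3SliceSnd A D B B' C x y k (m, k + n) =
      y ^ k • (appellF3Term A D B (B' + (k : ℂ) • 1) (C + (k : ℂ) • 1) x y (m, n) *
        mPoch B' k * (mPoch C k)⁻¹) := by
  have hscalar : ((k + n).descFactorial k : ℂ) * ((m.factorial : ℂ) * ((k + n).factorial : ℂ))⁻¹ *
      x ^ m * y ^ (k + n) =
        y ^ k * (((m.factorial : ℂ) * (n.factorial : ℂ))⁻¹ * x ^ m * y ^ n) := by
    rw [mul_inv, mul_left_comm, descFactorial_mul_inv_factorial, pow_add]
    ring
  have hC : Commute (mPoch B' k) (mPoch (C + (k : ℂ) • 1) (m + n))⁻¹ :=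
    (hB'C.add_right ((Commute.one_right B').smul_right _)).mPoch_mPoch k (m + n)
      |>.nonsing_inv_right
  have hB' : Commute (mPoch B' k) (mPoch (B' + (k : ℂ) • 1) n) :=
    ((Commute.refl B').add_right ((Commute.one_right B').smul_right _)).mPoch_mPoch k n
  have hmat : mPoch A m * mPoch D n * mPoch B m * mPoch B' (k + n) *
      (mPoch C (m + (k + n)))⁻¹ = mPoch A m * mPoch D n * mPoch B m *
        mPoch (B' + (k : ℂ) • 1) n * (mPoch (C + (k : ℂ) • 1) (m + n))⁻¹ * mPoch B' k *
        (mPoch C k)⁻¹ := by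
    rw [Nat.add_left_comm, mPoch_add C, Matrix.mul_inv_rev, mPoch_add B']
    have key : mPoch B' k * (mPoch (B' + (k : ℂ) • 1) n *
        ((mPoch (C + (k : ℂ) • 1) (m + n))⁻¹ * (mPoch C k)⁻¹)) =
        mPoch (B' + (k : ℂ) • 1) n * ((mPoch (C + (k : ℂ) • 1) (m + n))⁻¹ *
          (mPoch B' k * (mPoch C k)⁻¹)) := by
      rw [← mul_assoc, hB'.eq, mul_assoc, ← mul_assoc (mPoch B' k), hC.eq, mul_assoc]
    simp only [mul_assoc, key]
  rw [appellF3SliceSnd, appellF3Term, Nat.add_sub_cancel_left, hscalar, hmat, mul_smul,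
    Matrix.smul_mul, Matrix.smul_mul]

theorem hasSum_appellF3SliceFst {D A' B B' C : Mat} {x y : ℂ} (hx : ‖x‖ < 1) (hy : ‖y‖ < 1)
    (hDB : Commute D B) (hA'B : Commute A' B) (k : ℕ) :
    HasSum (appellF3SliceFst D A' B B' C x y k)
      (x ^ k • (mPoch B k * appellF3 D A' (B + (k : ℂ) • 1) B' (C + (k : ℂ) • 1) x y *
        (mPoch C k)⁻¹)) := by
  refine .of_shift_fst (fun p hp => appellF3SliceFst_of_lt _ _ _ _ _ _ _ hp) ?_
  simpa only [appellF3SliceFst_shift hDB hA'B] using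
    (((hasSum_appellF3 _ _ _ _ _ hx hy).mul_left _).mul_right _).const_smul (x ^ k)

theorem hasSum_appellF3SliceSnd {A D B B' C : Mat} {x y : ℂ} (hx : ‖x‖ < 1) (hy : ‖y‖ < 1)
    (hB'C : Commute B' C) (k : ℕ) :
    HasSum (appellF3SliceSnd A D B B' C x y k)
      (y ^ k • (appellF3 A D B (B' + (k : ℂ) • 1) (C + (k : ℂ) • 1) x y * mPoch B' k *
        (mPoch C k)⁻¹)) := by
  refine .of_shift_snd (fun p hp => appellF3SliceSnd_of_lt _ _ _ _ _ _ _ hp) ?_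
  simpa only [appellF3SliceSnd_shift hB'C] using
    (((hasSum_appellF3 _ _ _ _ _ hx hy).mul_right _).mul_right _).const_smul (y ^ k)

theorem appellF3_eq_sum_of_mPoch_eq_sum_fst {P A' B B' C : Mat} {x y : ℂ} (hx : ‖x‖ < 1)
    (hy : ‖y‖ < 1) {s : ℕ} {w : ℕ → ℂ} {D : ℕ → Mat} (hDB : ∀ k, Commute (D k) B)
    (hA'B : Commute A' B)
    (hP : ∀ M, mPoch P M = ∑ k ∈ range (s + 1), (w k * M.descFactorial k) • mPoch (D k) (M - k)) :
    appellF3 P A' B B' C x y =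
      ∑ k ∈ range (s + 1), (w k * x ^ k) •
        (mPoch B k * appellF3 (D k) A' (B + (k : ℂ) • 1) B' (C + (k : ℂ) • 1) x y *
          (mPoch C k)⁻¹) := by
  refine (hasSum_appellF3 P A' B B' C hx hy).unique ?_
  convert hasSum_sum (s := range (s + 1)) fun k _ =>
    (hasSum_appellF3SliceFst hx hy (hDB k) hA'B k).const_smul (w k) using 1
  · exact funext (appellF3Term_eq_sum_sliceFst hP)
  · simp only [mul_smul]

theorem appellF3_eq_sum_of_mPoch_eq_sum_snd {A P B B' C : Mat} {x y : ℂ} (hx : ‖x‖ < 1)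
    (hy : ‖y‖ < 1) {s : ℕ} {w : ℕ → ℂ} {D : ℕ → Mat} (hB'C : Commute B' C)
    (hP : ∀ M, mPoch P M = ∑ k ∈ range (s + 1), (w k * M.descFactorial k) • mPoch (D k) (M - k)) :
    appellF3 A P B B' C x y =
      ∑ k ∈ range (s + 1), (w k * y ^ k) •
        (appellF3 A (D k) B (B' + (k : ℂ) • 1) (C + (k : ℂ) • 1) x y * mPoch B' k *
          (mPoch C k)⁻¹) := by
  refine (hasSum_appellF3 A P B B' C hx hy).unique ?_
  convert hasSum_sum (s := range (s + 1)) fun k _ =>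
    (hasSum_appellF3SliceSnd hx hy hB'C k).const_smul (w k) using 1
  · exact funext (appellF3Term_eq_sum_sliceSnd hP)
  · simp only [mul_smul]

theorem appellF3_recursion_A_binom_general {r : ℕ} (A A' B B' C : Matrix (Fin r) (Fin r) ℂ) (x y : ℂ)
    (s : ℕ)
    (hAB : A * B = B * A) (hA'B : A' * B = B * A')
    (hB'C : B' * C = C * B')
    (hx : ‖x‖ < 1) (hy : ‖y‖ < 1) :
    ((∀ k : ℕ, IsUnit (A + (k : ℂ) • (1 : Matrix (Fin r) (Fin r) ℂ))) →
      appellF3 (A + (s : ℂ) • 1) A' B B' C x y =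
        ∑ k ∈ Finset.range (s + 1),
          ((s.choose k : ℂ) * x ^ k) •
            (mPoch B k *
              appellF3 (A + (k : ℂ) • 1) A' (B + (k : ℂ) • 1) B' (C + (k : ℂ) • 1) x y *
              (mPoch C k)⁻¹)) ∧
    ((∀ k : ℕ, IsUnit (A' + (k : ℂ) • (1 : Matrix (Fin r) (Fin r) ℂ))) →
      appellF3 A (A' + (s : ℂ) • 1) B B' C x y =
        ∑ k ∈ Finset.range (s + 1),
          ((s.choose k : ℂ) * y ^ k) •
            (appellF3 A (A' + (k : ℂ) • 1) B (B' + (k : ℂ) • 1) (C + (k : ℂ) • 1) x y *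
              mPoch B' k * (mPoch C k)⁻¹)) ∧
    ((∀ k : ℕ, 1 ≤ k → k ≤ s → IsUnit (A - (k : ℂ) • (1 : Matrix (Fin r) (Fin r) ℂ))) →
      appellF3 (A - (s : ℂ) • 1) A' B B' C x y =
        ∑ k ∈ Finset.range (s + 1),
          ((s.choose k : ℂ) * (-x) ^ k) •
            (mPoch B k *
              appellF3 A A' (B + (k : ℂ) • 1) B' (C + (k : ℂ) • 1) x y *
              (mPoch C k)⁻¹)) ∧
    ((∀ k : ℕ, 1 ≤ k → k ≤ s → IsUnit (A' - (k : ℂ) • (1 : Matrix (Fin r) (Fin r) ℂ))) →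
      appellF3 A (A' - (s : ℂ) • 1) B B' C x y =
        ∑ k ∈ Finset.range (s + 1),
          ((s.choose k : ℂ) * (-y) ^ k) •
            (appellF3 A A' B (B' + (k : ℂ) • 1) (C + (k : ℂ) • 1) x y *
              mPoch B' k * (mPoch C k)⁻¹)) := by
  have hAkB (k : ℕ) : Commute (A + (k : ℂ) • 1) B :=
    Commute.add_left hAB ((Commute.one_left B).smul_left _)
  have hsign (z : ℂ) (k : ℕ) : (s.choose k : ℂ) * (-1) ^ k * z ^ k =
      (s.choose k : ℂ) * (-z) ^ k := by
    rw [neg_pow z, mul_assoc]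
  refine ⟨fun _ => ?_, fun _ => ?_, fun _ => ?_, fun _ => ?_⟩
  · exact appellF3_eq_sum_of_mPoch_eq_sum_fst hx hy hAkB hA'B (mPoch_add_natCast_smul_eq_sum A s)
  · exact appellF3_eq_sum_of_mPoch_eq_sum_snd hx hy hB'C (mPoch_add_natCast_smul_eq_sum A' s)
  · simpa only [hsign] using appellF3_eq_sum_of_mPoch_eq_sum_fst hx hy (fun _ => hAB) hA'B
      (mPoch_sub_natCast_smul_eq_sum A s)
  · simpa only [hsign] using appellF3_eq_sum_of_mPoch_eq_sum_snd hx hy hB'C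
      (mPoch_sub_natCast_smul_eq_sum A' s)

theorem appellF3_recursion_A_binom {r : ℕ} (A A' B B' C : Matrix (Fin r) (Fin r) ℂ) (x y : ℂ)
    (s : ℕ)
    (hC : ∀ n : ℕ, IsUnit (C + (n : ℂ) • (1 : Matrix (Fin r) (Fin r) ℂ)))
    (hAA' : A * A' = A' * A) (hAB : A * B = B * A) (hA'B : A' * B = B * A')
    (hB'C : B' * C = C * B')
    (hx : ‖x‖ < 1) (hy : ‖y‖ < 1) :
    ((∀ k : ℕ, IsUnit (A + (k : ℂ) • (1 : Matrix (Fin r) (Fin r) ℂ))) →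
      appellF3 (A + (s : ℂ) • 1) A' B B' C x y =
        ∑ k ∈ Finset.range (s + 1),
          ((s.choose k : ℂ) * x ^ k) •
            (mPoch B k *
              appellF3 (A + (k : ℂ) • 1) A' (B + (k : ℂ) • 1) B' (C + (k : ℂ) • 1) x y *
              (mPoch C k)⁻¹)) ∧
    ((∀ k : ℕ, IsUnit (A' + (k : ℂ) • (1 : Matrix (Fin r) (Fin r) ℂ))) →
      appellF3 A (A' + (s : ℂ) • 1) B B' C x y =
        ∑ k ∈ Finset.range (s + 1),
          ((s.choose k : ℂ) * y ^ k) •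
            (appellF3 A (A' + (k : ℂ) • 1) B (B' + (k : ℂ) • 1) (C + (k : ℂ) • 1) x y *
              mPoch B' k * (mPoch C k)⁻¹)) ∧
    ((∀ k : ℕ, 1 ≤ k → k ≤ s → IsUnit (A - (k : ℂ) • (1 : Matrix (Fin r) (Fin r) ℂ))) →
      appellF3 (A - (s : ℂ) • 1) A' B B' C x y =
        ∑ k ∈ Finset.range (s + 1),
          ((s.choose k : ℂ) * (-x) ^ k) •
            (mPoch B k *
              appellF3 A A' (B + (k : ℂ) • 1) B' (C + (k : ℂ) • 1) x y *
              (mPoch C k)⁻¹)) ∧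
    ((∀ k : ℕ, 1 ≤ k → k ≤ s → IsUnit (A' - (k : ℂ) • (1 : Matrix (Fin r) (Fin r) ℂ))) →
      appellF3 A (A' - (s : ℂ) • 1) B B' C x y =
        ∑ k ∈ Finset.range (s + 1),
          ((s.choose k : ℂ) * (-y) ^ k) •
            (appellF3 A A' B (B' + (k : ℂ) • 1) (C + (k : ℂ) • 1) x y *
              mPoch B' k * (mPoch C k)⁻¹)) :=
  appellF3_recursion_A_binom_general A A' B B' C x y s hAB hA'B hB'C hx hy
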